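/- Let P_n be the matrix obtained from M_n by deleting its last row and first column. Then det P_n / det P_{n−1} = (−1)^{n−1} a x^{n−1} [n]_{t,u} Π_{i=1}^{n−1}(1 − a x^i [n−i]_{x,y}), and consequently det P_n = (−1)^{binom(n,2)} a^n x^{binom(n,2)} [n]_{t,u}! Π_{m=1}^{n−1} Π_{i=1}^{m}(1 − a x^i [m−i+1]_{x,y}). -/

import Mathlib

noncomputable section

/-- `Nsz n = (n+1)(n+2)/2`, the size of the matrix `M_n`. -/
def Nsz : ℕ → ℕ
  | 0 => 1
  | n + 1 => Nsz n + (n + 2)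

theorem Nsz_pos (n : ℕ) : 0 < Nsz n := by
  cases n <;> simp [Nsz]

/-- The coefficient ring `ℚ[a,x,y,t,u]`. -/
abbrev R5 : Type := MvPolynomial (Fin 5) ℚ

def av : R5 := MvPolynomial.X 0
def xv : R5 := MvPolynomial.X 1
def yv : R5 := MvPolynomial.X 2
def tv : R5 := MvPolynomial.X 3
def uv : R5 := MvPolynomial.X 4

/-- The two-parameter integer `[m]_{x,y} = ∑_{j=0}^{m-1} x^j y^{m-1-j}` (with `[0] = 0`). -/
def pqint (x y : R5) (m : ℕ) : R5 := ∑ j ∈ Finset.range m, x ^ j * y ^ (m - 1 - j)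

/-- The lower-right block `M̂_n` of `M_{n+1}`: the `(n+2)×(n+2)` matrix with (1-based)
entries `δ_{ij} - a x^{i-1} [(n+2)-i]_{x,y} (δ_{ij} + δ_{i+1,j})`. -/
def Mhat (n : ℕ) : Matrix (Fin (n + 2)) (Fin (n + 2)) R5 := fun i j =>
  (if (i : ℕ) = (j : ℕ) then 1 else 0) -
    av * xv ^ (i : ℕ) * pqint xv yv (n + 1 - (i : ℕ)) *
      ((if (i : ℕ) = (j : ℕ) then 1 else 0) + (if (i : ℕ) + 1 = (j : ℕ) then 1 else 0))

/-- The upper-right block `M̄_n` of `M_{n+1}`: only its last `n+1` rows are nonzero, and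
those form the `(n+1)×(n+2)` matrix with (1-based) entries
`-a x^{i-1} y^{(n+1)-i} [n+1]_{t,u} (δ_{ij} + δ_{i+1,j})`. -/
def Mbar (n : ℕ) : Matrix (Fin (Nsz n)) (Fin (n + 2)) R5 := fun r j =>
  if Nsz n ≤ (r : ℕ) + (n + 1) then
    -av * xv ^ ((r : ℕ) - (Nsz n - (n + 1))) * yv ^ (n - ((r : ℕ) - (Nsz n - (n + 1)))) *
      pqint tv uv (n + 1) *
      ((if (r : ℕ) - (Nsz n - (n + 1)) = (j : ℕ) then 1 else 0) +
        (if (r : ℕ) - (Nsz n - (n + 1)) + 1 = (j : ℕ) then 1 else 0))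
  else 0

/-- The recursively defined matrix `M_n`. -/
def Mmat : (n : ℕ) → Matrix (Fin (Nsz n)) (Fin (Nsz n)) R5
  | 0 => fun _ _ => 1
  | n + 1 => fun p q =>
      Matrix.fromBlocks (Mmat n) (Mbar n) 0 (Mhat n)
        (finSumFinEquiv.symm p) (finSumFinEquiv.symm q)

/-- `P_n`: the matrix `M_n` with its last row and first column deleted. -/
def Pmat (n : ℕ) : Matrix (Fin (Nsz n - 1)) (Fin (Nsz n - 1)) R5 := fun i j =>
  Mmat n ⟨(i : ℕ), lt_of_lt_of_le i.isLt (Nat.sub_le _ _)⟩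
    ⟨(j : ℕ) + 1, by have := j.isLt; have := Nsz_pos n; omega⟩

/-- The `(t,u)`-factorial `[n]_{t,u}!`. -/
def tufact (n : ℕ) : R5 := ∏ j ∈ Finset.Icc 1 n, pqint tv uv j

/-!
`M_n` is block upper triangular with triangular diagonal blocks whose diagonal entries are
`1 - a x^i [n+1-i]_{x,y} ≠ 0`, so it is invertible over the fraction field, and `det P_n` is, up
to the sign `(-1)^(N_n - 1) = (-1)^C(n,2)`, the entry of `adj M_n` in the first row and last column.

Let `g_n(k)` be the entries of the first row of `adj M_n` in the columns of the last diagonal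
block. Reading the first row of `adj M_{n+1} * M_{n+1} = det M_{n+1} • 1` blockwise gives
`g_{n+1} * M̂_n = -det M̂_n • (adj M_n)_1 * M̄_n`: a bidiagonal system with invertible diagonal,
so `g_{n+1}` is determined by `g_n`. The closed form
`g_n(k) = a^n [n]_{t,u}! ∏_{m<n} ∏_{i=1}^m (1 - a x^i [m+1-i]_{x,y}) · x^C(k,2) y^C(n-k,2) B(n,k)`,
with `B` the `(x,y)`-binomial coefficient, solves the same system; this reduces to the Pascal rule
for `B` and to `[k+1] B(n,k+1) = [n-k] B(n,k)`, which follows from `B(n,k) [k]! [n-k]! = [n]!`.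
At `k = n` it is the stated formula for `det P_n`.
-/

open Finset Matrix

theorem Nat.succ_choose_two (m : ℕ) : (m + 1).choose 2 = m.choose 2 + m := by
  simp [Nat.choose_succ_succ', add_comm]

theorem Finset.prod_Icc_one_eq_prod_range {M : Type*} [CommMonoid M] (f : ℕ → M) (n : ℕ) :
    ∏ i ∈ Icc 1 n, f i = ∏ i ∈ range n, f (i + 1) := by
  rw [range_eq_Ico, prod_Ico_add' f 0 n 1]
  rfl

theorem Matrix.vecMul_injective_of_det_mem_nonZeroDivisors {R n : Type*} [CommRing R] [Fintype n]
    [DecidableEq n] {A : Matrix n n R} (hA : A.det ∈ nonZeroDivisors R) :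
    Function.Injective (· ᵥ* A) :=
  isRightRegular_iff_vecMul_injective.mp <|
    isRightRegular_iff_nonsingular.mpr <| nonsingular_iff_det_mem_nonZeroDivisors.mpr hA

theorem Matrix.adjugate_fromBlocks_zero₂₁_inl_inr_vecMul {R m n : Type*} [CommRing R]
    [Fintype m] [Fintype n] [DecidableEq m] [DecidableEq n] (A : Matrix m m R)
    (B : Matrix m n R) (D : Matrix n n R) (hA : A.det ∈ nonZeroDivisors R) (i : m) :
    (fun k => adjugate (fromBlocks A B 0 D) (Sum.inl i) (Sum.inr k)) ᵥ* D =
      -(D.det • (adjugate A i ᵥ* B)) := by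
  set N := fromBlocks A B 0 D
  set p : m → R := fun j => adjugate N (Sum.inl i) (Sum.inl j)
  have hrow := congrFun (adjugate_mul N) (Sum.inl i)
  rw [mul_apply_eq_vecMul, vecMul_fromBlocks, vecMul_zero, add_zero] at hrow
  have hp : p = D.det • adjugate A i := by
    refine vecMul_injective_of_det_mem_nonZeroDivisors hA ?_
    show p ᵥ* A = (D.det • adjugate A i) ᵥ* A
    have h := congrArg (· ∘ Sum.inl) hrow
    simp only [Sum.elim_comp_inl] at h
    change p ᵥ* A = _ at h
    rw [h, smul_vecMul, ← mul_apply_eq_vecMul, adjugate_mul, det_fromBlocks_zero₂₁]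
    ext j
    simp [one_apply, mul_comm]
  have h : p ᵥ* B + (fun k => adjugate N (Sum.inl i) (Sum.inr k)) ᵥ* D = 0 := by
    have h := congrArg (· ∘ Sum.inr) hrow
    simp only [Sum.elim_comp_inr] at h
    refine h.trans ?_
    ext k
    simp
  rw [hp, smul_vecMul] at h
  rw [eq_neg_iff_add_eq_zero, add_comm, h]

theorem pqint_zero (x y : R5) : pqint x y 0 = 0 := by simp [pqint]

theorem pqint_add (x y : R5) (j d : ℕ) :
    pqint x y (j + d) = x ^ j * pqint x y d + y ^ d * pqint x y j := by
  unfold pqint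
  rw [← sum_range_add_sum_Ico _ (Nat.le_add_right j d), sum_Ico_eq_sum_range,
    Nat.add_sub_cancel_left, mul_sum, mul_sum, add_comm]
  congr 1 <;> refine sum_congr rfl fun i hi => ?_ <;> have := mem_range.mp hi
  · rw [show j + d - 1 - (j + i) = d - 1 - i by omega, pow_add, mul_assoc]
  · rw [show j + d - 1 - i = (j - 1 - i) + d by omega, pow_add]
    ring

theorem pqint_ne_zero {m : ℕ} (hm : m ≠ 0) : pqint xv yv m ≠ 0 := by
  intro h
  have := congrArg (MvPolynomial.eval fun _ => (1 : ℚ)) h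
  simp [pqint, xv, yv, hm] at this

def pqfact (x y : R5) (n : ℕ) : R5 := ∏ j ∈ Icc 1 n, pqint x y j

theorem pqfact_zero (x y : R5) : pqfact x y 0 = 1 := rfl

theorem pqfact_succ (x y : R5) (n : ℕ) : pqfact x y (n + 1) = pqfact x y n * pqint x y (n + 1) :=
  prod_Icc_succ_top (Nat.le_add_left 1 n) _

theorem pqfact_ne_zero (n : ℕ) : pqfact xv yv n ≠ 0 :=
  prod_ne_zero_iff.mpr fun j hj => pqint_ne_zero (by have := (mem_Icc.mp hj).1; omega)

theorem tufact_succ (n : ℕ) : tufact (n + 1) = tufact n * pqint tv uv (n + 1) :=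
  pqfact_succ tv uv n

def xyBinom : ℕ → ℕ → R5
  | _, 0 => 1
  | 0, _ + 1 => 0
  | n + 1, k + 1 => xv ^ (k + 1) * xyBinom n (k + 1) + yv ^ (n - k) * xyBinom n k

theorem xyBinom_zero_right (n : ℕ) : xyBinom n 0 = 1 := by cases n <;> rfl

theorem xyBinom_succ_succ (n k : ℕ) :
    xyBinom (n + 1) (k + 1) = xv ^ (k + 1) * xyBinom n (k + 1) + yv ^ (n - k) * xyBinom n k :=
  rfl

theorem xyBinom_eq_zero_of_lt {n k : ℕ} (h : n < k) : xyBinom n k = 0 := by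
  induction n generalizing k with
  | zero => obtain ⟨k, rfl⟩ := Nat.exists_eq_add_of_lt h; rfl
  | succ n ih =>
    obtain ⟨k, rfl⟩ : ∃ k', k = k' + 1 := ⟨k - 1, by omega⟩
    rw [xyBinom_succ_succ, ih (by omega), ih (by omega)]
    ring

theorem xyBinom_self (n : ℕ) : xyBinom n n = 1 := by
  induction n with
  | zero => rfl
  | succ n ih => rw [xyBinom_succ_succ, xyBinom_eq_zero_of_lt (Nat.lt_succ_self n), ih]; simp

theorem xyBinom_mul_pqfact {n k : ℕ} (h : k ≤ n) :
    xyBinom n k * pqfact xv yv k * pqfact xv yv (n - k) = pqfact xv yv n := by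
  induction n generalizing k with
  | zero => obtain rfl := Nat.le_zero.mp h; simp [xyBinom_zero_right, pqfact_zero]
  | succ n ih =>
    rcases k with _ | k
    · simp [xyBinom_zero_right, pqfact_zero]
    rw [xyBinom_succ_succ, pqfact_succ, pqfact_succ, Nat.add_sub_add_right]
    rcases (Nat.le_of_succ_le_succ h).eq_or_lt with rfl | hlt
    · simp [xyBinom_eq_zero_of_lt (Nat.lt_succ_self k), xyBinom_self, pqfact_zero]
    obtain ⟨d, hd⟩ : ∃ d, n - k = d + 1 := ⟨n - k - 1, by omega⟩
    have hsum := pqint_add xv yv (k + 1) (d + 1)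
    have hk := ih hlt.le
    have hk1 := ih hlt
    rw [show k + 1 + (d + 1) = n + 1 by omega] at hsum
    rw [hd, pqfact_succ] at hk
    rw [show n - (k + 1) = d by omega, pqfact_succ] at hk1
    rw [hd, pqfact_succ]
    linear_combination (xv ^ (k + 1) * pqint xv yv (d + 1)) * hk1 +
      (yv ^ (d + 1) * pqint xv yv (k + 1)) * hk - pqfact xv yv n * hsum

theorem pqint_mul_xyBinom_succ {n k : ℕ} (h : k < n) :
    pqint xv yv (k + 1) * xyBinom n (k + 1) = pqint xv yv (n - k) * xyBinom n k := by
  obtain ⟨d, hd⟩ : ∃ d, n - k = d + 1 := ⟨n - k - 1, by omega⟩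
  have h1 := xyBinom_mul_pqfact (Nat.succ_le_of_lt h)
  have h2 := xyBinom_mul_pqfact h.le
  rw [show n - (k + 1) = d by omega, pqfact_succ] at h1
  rw [hd, pqfact_succ] at h2
  rw [hd]
  refine mul_left_cancel₀ (mul_ne_zero (pqfact_ne_zero k) (pqfact_ne_zero d)) ?_
  linear_combination h1 - h2

def twistedBinom (n k : ℕ) : R5 := xv ^ k.choose 2 * yv ^ (n - k).choose 2 * xyBinom n k

theorem twistedBinom_eq_zero_of_lt {n k : ℕ} (h : n < k) : twistedBinom n k = 0 := by
  rw [twistedBinom, xyBinom_eq_zero_of_lt h, mul_zero]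

theorem twistedBinom_self (n : ℕ) : twistedBinom n n = xv ^ n.choose 2 := by
  simp [twistedBinom, xyBinom_self]

theorem twistedBinom_succ_zero (n : ℕ) : twistedBinom (n + 1) 0 = yv ^ n * twistedBinom n 0 := by
  simp only [twistedBinom, xyBinom_zero_right, Nat.sub_zero, Nat.succ_choose_two]
  ring

theorem twistedBinom_succ_succ {n k : ℕ} (h : k ≤ n) :
    twistedBinom (n + 1) (k + 1) =
      xv ^ k * yv ^ (n - k) * twistedBinom n k +
        xv ^ (k + 1) * yv ^ (n - (k + 1)) * twistedBinom n (k + 1) := by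
  obtain ⟨d, rfl⟩ := Nat.exists_eq_add_of_le h
  rcases d with _ | d
  · simp only [twistedBinom, xyBinom_succ_succ, xyBinom_eq_zero_of_lt (Nat.lt_succ_self k),
      Nat.succ_choose_two, Nat.sub_self, add_zero]
    ring
  · simp only [twistedBinom, xyBinom_succ_succ, Nat.succ_choose_two,
      show k + (d + 1) + 1 - (k + 1) = d + 1 by omega, show k + (d + 1) - k = d + 1 by omega,
      show k + (d + 1) - (k + 1) = d by omega]
    ring

theorem twistedBinom_ratio {n k : ℕ} (h : k ≤ n) :
    yv ^ (n - k) * pqint xv yv (k + 1) * twistedBinom (n + 1) (k + 1) =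
      xv ^ k * pqint xv yv (n + 1 - k) * twistedBinom (n + 1) k := by
  have hr := pqint_mul_xyBinom_succ (Nat.lt_succ_of_le h)
  simp only [twistedBinom, Nat.succ_choose_two, Nat.add_sub_add_right,
    show n + 1 - k = n - k + 1 by omega] at hr ⊢
  linear_combination xv ^ (k.choose 2 + k) * yv ^ ((n - k).choose 2 + (n - k)) * hr

theorem succ_le_Nsz (n : ℕ) : n + 1 ≤ Nsz n := by
  induction n with
  | zero => rfl
  | succ n ih => simp only [Nsz]; omega

theorem Nsz_eq (n : ℕ) : Nsz n = n.choose 2 + 2 * n + 1 := by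
  induction n with
  | zero => rfl
  | succ n ih => rw [Nsz, ih, Nat.succ_choose_two]; ring

def hatCoeff (n i : ℕ) : R5 := av * xv ^ i * pqint xv yv (n + 1 - i)

def rowFactor (n : ℕ) : R5 := ∏ i ∈ Icc 1 n, (1 - hatCoeff n i)

theorem one_sub_hatCoeff_ne_zero (n i : ℕ) : 1 - hatCoeff n i ≠ 0 := by
  intro h
  have := congrArg (MvPolynomial.eval fun _ => (0 : ℚ)) h
  simp [hatCoeff, av] at this

theorem rowFactor_ne_zero (n : ℕ) : rowFactor n ≠ 0 :=
  prod_ne_zero_iff.mpr fun i _ => one_sub_hatCoeff_ne_zero n i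

theorem Mhat_apply_eq (n : ℕ) (i j : Fin (n + 2)) :
    Mhat n i j = (if (i : ℕ) = j then 1 - hatCoeff n i else 0) -
      if (i : ℕ) + 1 = j then hatCoeff n i else 0 := by
  unfold Mhat hatCoeff
  split_ifs <;> first | omega | ring

theorem det_Mhat (n : ℕ) : (Mhat n).det = (1 - hatCoeff n 0) * rowFactor n := by
  have htri : (Mhat n).BlockTriangular id := fun i j (hij : j < i) => by
    rw [Mhat_apply_eq, if_neg (by omega), if_neg (by omega), sub_zero]
  have hdiag (i : Fin (n + 2)) : Mhat n i i = 1 - hatCoeff n i := by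
    rw [Mhat_apply_eq, if_pos rfl, if_neg (by omega), sub_zero]
  have hlast : hatCoeff n (n + 1) = 0 := by rw [hatCoeff, Nat.sub_self, pqint_zero, mul_zero]
  rw [det_of_isUpperTriangular htri, Fintype.prod_congr _ _ hdiag,
    Fin.prod_univ_eq_prod_range (fun i => 1 - hatCoeff n i), prod_range_succ', prod_range_succ,
    hlast, sub_zero, mul_one, mul_comm, rowFactor, prod_Icc_one_eq_prod_range]

theorem det_Mmat_succ (n : ℕ) : (Mmat (n + 1)).det = (Mmat n).det * (Mhat n).det :=
  (det_submatrix_equiv_self finSumFinEquiv.symm _).trans (det_fromBlocks_zero₂₁ _ _ _)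

theorem det_Mmat_ne_zero (n : ℕ) : (Mmat n).det ≠ 0 := by
  induction n with
  | zero => exact (det_fin_one (Mmat 0)).trans_ne one_ne_zero
  | succ n ih =>
    rw [det_Mmat_succ, det_Mhat]
    exact mul_ne_zero ih (mul_ne_zero (one_sub_hatCoeff_ne_zero n 0) (rowFactor_ne_zero n))

theorem vecMul_Mhat_zero (n : ℕ) (v : Fin (n + 2) → R5) :
    (v ᵥ* Mhat n) 0 = (1 - hatCoeff n 0) * v 0 := by
  rw [vecMul, dotProduct, Fintype.sum_eq_single 0 fun i hi => ?_]
  · rw [Mhat_apply_eq, if_pos rfl, if_neg (by simp), sub_zero, mul_comm, Fin.val_zero]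
  · have hi : (i : ℕ) ≠ 0 := Fin.val_ne_of_ne hi
    rw [Mhat_apply_eq, Fin.val_zero, if_neg hi, if_neg (by omega), sub_zero, mul_zero]

theorem vecMul_Mhat_succ (n : ℕ) (v : Fin (n + 2) → R5) (k : Fin (n + 1)) :
    (v ᵥ* Mhat n) k.succ = (1 - hatCoeff n (k + 1)) * v k.succ - hatCoeff n k * v k.castSucc := by
  rw [vecMul, dotProduct, Fintype.sum_eq_add k.succ k.castSucc
    (Fin.castSucc_lt_succ (i := k)).ne' fun i ⟨h1, h2⟩ => ?_]
  · simp only [Mhat_apply_eq, Fin.val_succ, Fin.val_castSucc, if_pos, if_neg (Nat.succ_ne_self _),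
      if_neg (Nat.ne_add_one _)]
    ring
  · have h1 : (i : ℕ) ≠ k + 1 := Fin.val_ne_of_ne h1
    have h2 : (i : ℕ) ≠ k := Fin.val_ne_of_ne h2
    rw [Mhat_apply_eq, Fin.val_succ, if_neg h1, if_neg (by omega), sub_zero, mul_zero]

def lastBlock (n : ℕ) (v : Fin (Nsz n) → R5) (l : ℕ) : R5 :=
  if hl : l ≤ n then v ⟨Nsz n - (n + 1) + l, by have := succ_le_Nsz n; omega⟩ else 0

theorem lastBlock_of_lt {n l : ℕ} (v : Fin (Nsz n) → R5) (hl : n < l) : lastBlock n v l = 0 :=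
  dif_neg (by omega)

theorem vecMul_Mbar (n : ℕ) (v : Fin (Nsz n) → R5) (j : Fin (n + 2)) :
    (v ᵥ* Mbar n) j = -(pqint tv uv (n + 1) * ∑ l ∈ range (n + 1),
      av * xv ^ l * yv ^ (n - l) * lastBlock n v l *
        ((if l = j then 1 else 0) + if l + 1 = j then 1 else 0)) := by
  have e : Nsz n = Nsz n - (n + 1) + (n + 1) := (Nat.sub_add_cancel (succ_le_Nsz n)).symm
  rw [vecMul, dotProduct, ← (finCongr e.symm).sum_comp, Fin.sum_univ_add,
    Fintype.sum_eq_zero _ fun r => ?_, zero_add, ← neg_mul, mul_sum,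
    ← Fin.sum_univ_eq_sum_range]
  · refine Fintype.sum_congr _ _ fun l => ?_
    have hl : (l : ℕ) ≤ n := Nat.lt_succ_iff.mp l.isLt
    rw [lastBlock, dif_pos hl, show finCongr e.symm (Fin.natAdd _ l) = ⟨_, _⟩ from Fin.ext rfl]
    simp only [Mbar, Fin.val_natAdd, Nat.add_sub_cancel_left]
    rw [if_pos (by omega)]
    ring
  · simp only [Mbar, finCongr_apply, Fin.val_cast, Fin.val_castAdd]
    rw [if_neg (by omega), mul_zero]

def lastBlockCofactor (n : ℕ) : ℕ → R5 := lastBlock n (adjugate (Mmat n) ⟨0, Nsz_pos n⟩)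

theorem lastBlockCofactor_zero_zero : lastBlockCofactor 0 0 = 1 := by
  have h : adjugate (Mmat 0) = 1 := adjugate_fin_one _
  rw [lastBlockCofactor, lastBlock, dif_pos le_rfl, h]
  rfl

theorem lastBlockCofactor_succ (n : ℕ) (k : Fin (n + 2)) :
    lastBlockCofactor (n + 1) k =
      adjugate (fromBlocks (Mmat n) (Mbar n) 0 (Mhat n)) (Sum.inl ⟨0, Nsz_pos n⟩) (Sum.inr k) := by
  have h := congrFun (congrFun (adjugate_submatrix_equiv_self finSumFinEquiv.symm
    (fromBlocks (Mmat n) (Mbar n) 0 (Mhat n))) (Fin.castAdd (n + 2) ⟨0, Nsz_pos n⟩))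
    (Fin.natAdd (Nsz n) k)
  rw [submatrix_apply, finSumFinEquiv_symm_apply_castAdd, finSumFinEquiv_symm_apply_natAdd] at h
  rw [lastBlockCofactor, lastBlock, dif_pos (Nat.lt_succ_iff.mp k.isLt), ← h]
  exact congr_arg₂ (adjugate (Mmat (n + 1))) (Fin.ext rfl) (Fin.ext (by simp [Nsz]))

theorem lastBlockCofactor_vecMul_Mhat (n : ℕ) :
    (fun k : Fin (n + 2) => lastBlockCofactor (n + 1) k) ᵥ* Mhat n =
      -((Mhat n).det • (adjugate (Mmat n) ⟨0, Nsz_pos n⟩ ᵥ* Mbar n)) := by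
  simp only [lastBlockCofactor_succ]
  exact adjugate_fromBlocks_zero₂₁_inl_inr_vecMul _ _ _
    (mem_nonZeroDivisors_of_ne_zero (det_Mmat_ne_zero n)) _

theorem lastBlockCofactor_succ_zero (n : ℕ) :
    (1 - hatCoeff n 0) * lastBlockCofactor (n + 1) 0 =
      (1 - hatCoeff n 0) * rowFactor n *
        (pqint tv uv (n + 1) * (av * yv ^ n * lastBlockCofactor n 0)) := by
  have h := congrFun (lastBlockCofactor_vecMul_Mhat n) 0
  rw [vecMul_Mhat_zero, Pi.neg_apply, Pi.smul_apply, vecMul_Mbar, det_Mhat] at h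
  rw [sum_eq_single_of_mem 0 (mem_range.mpr n.succ_pos) fun l _ hl => by simp [hl]] at h
  simp only [Fin.val_zero, if_pos, Nat.add_one_ne_zero, if_false, add_zero, mul_one, pow_zero,
    Nat.sub_zero, smul_eq_mul] at h
  rw [h, mul_neg, neg_neg]
  rfl

theorem lastBlockCofactor_succ_succ {n k : ℕ} (hk : k ≤ n) :
    (1 - hatCoeff n (k + 1)) * lastBlockCofactor (n + 1) (k + 1) -
        hatCoeff n k * lastBlockCofactor (n + 1) k =
      (1 - hatCoeff n 0) * rowFactor n * (pqint tv uv (n + 1) *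
        (av * xv ^ k * yv ^ (n - k) * lastBlockCofactor n k +
          av * xv ^ (k + 1) * yv ^ (n - (k + 1)) * lastBlockCofactor n (k + 1))) := by
  have h := congrFun (lastBlockCofactor_vecMul_Mhat n) (Fin.succ ⟨k, Nat.lt_succ_of_le hk⟩)
  rw [vecMul_Mhat_succ, Pi.neg_apply, Pi.smul_apply, vecMul_Mbar, det_Mhat] at h
  simp only [Fin.val_succ, Fin.castSucc_mk, Fin.val_mk, add_left_inj, mul_add, mul_ite, mul_one,
    mul_zero, sum_add_distrib, sum_ite_eq', mem_range, smul_eq_mul,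
    if_pos (Nat.lt_succ_of_le hk)] at h
  rw [h, lastBlockCofactor]
  split_ifs with hkn
  · ring
  · rw [lastBlock_of_lt (l := k + 1) _ (by omega)]
    ring

def cofactorFormula (n k : ℕ) : R5 :=
  av ^ n * tufact n * (∏ m ∈ range n, rowFactor m) * twistedBinom n k

theorem cofactorFormula_succ_zero (n : ℕ) :
    (1 - hatCoeff n 0) * cofactorFormula (n + 1) 0 =
      (1 - hatCoeff n 0) * rowFactor n *
        (pqint tv uv (n + 1) * (av * yv ^ n * cofactorFormula n 0)) := by
  rw [cofactorFormula, cofactorFormula, tufact_succ, prod_range_succ, twistedBinom_succ_zero]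
  ring

theorem cofactorFormula_succ_succ {n k : ℕ} (hk : k ≤ n) :
    (1 - hatCoeff n (k + 1)) * cofactorFormula (n + 1) (k + 1) -
        hatCoeff n k * cofactorFormula (n + 1) k =
      (1 - hatCoeff n 0) * rowFactor n * (pqint tv uv (n + 1) *
        (av * xv ^ k * yv ^ (n - k) * cofactorFormula n k +
          av * xv ^ (k + 1) * yv ^ (n - (k + 1)) * cofactorFormula n (k + 1))) := by
  have hsplit := pqint_add xv yv (k + 1) (n - k)
  rw [show k + 1 + (n - k) = n + 1 by omega] at hsplit
  simp only [cofactorFormula, hatCoeff, tufact_succ, prod_range_succ, Nat.add_sub_add_right,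
    Nat.sub_zero, pow_zero, mul_one]
  set G := av ^ n * tufact n * (∏ m ∈ range n, rowFactor m) * rowFactor n * pqint tv uv (n + 1)
  linear_combination
    (av * G * (1 - av * pqint xv yv (n + 1))) * twistedBinom_succ_succ hk +
      (av * G * av) * twistedBinom_ratio hk +
      (av * G * av * twistedBinom (n + 1) (k + 1)) * hsplit

theorem lastBlockCofactor_eq_cofactorFormula (n k : ℕ) :
    lastBlockCofactor n k = cofactorFormula n k := by
  induction n generalizing k with
  | zero =>
    rcases k with _ | k
    · rw [lastBlockCofactor_zero_zero]
      simp [cofactorFormula, twistedBinom, xyBinom_zero_right, tufact]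
    · rw [lastBlockCofactor, lastBlock_of_lt _ k.succ_pos, cofactorFormula,
        twistedBinom_eq_zero_of_lt k.succ_pos, mul_zero]
  | succ n ih =>
    induction k with
    | zero =>
      refine mul_left_cancel₀ (one_sub_hatCoeff_ne_zero n 0) ?_
      rw [lastBlockCofactor_succ_zero, cofactorFormula_succ_zero, ih]
    | succ k ihk =>
      by_cases hk : k ≤ n
      · refine mul_left_cancel₀ (one_sub_hatCoeff_ne_zero n (k + 1)) ?_
        linear_combination (lastBlockCofactor_succ_succ hk).trans (by rw [ih, ih]) +
          hatCoeff n k * ihk - cofactorFormula_succ_succ hk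
      · rw [lastBlockCofactor, lastBlock_of_lt _ (by omega), cofactorFormula,
          twistedBinom_eq_zero_of_lt (by omega), mul_zero]

theorem det_Pmat (n : ℕ) : (Pmat n).det = (-1) ^ n.choose 2 * lastBlockCofactor n n := by
  have hN : Nsz n = (Nsz n - 1) + 1 := (Nat.sub_add_cancel (Nsz_pos n)).symm
  set e : Fin (Nsz n - 1 + 1) ≃ Fin (Nsz n) := finCongr hN.symm
  have h := adjugate_fin_succ_eq_det_submatrix ((Mmat n).submatrix e e) 0 (Fin.last _)
  have hP : ((Mmat n).submatrix e e).submatrix (Fin.last _).succAbove (0 : Fin _).succAbove =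
      Pmat n := by
    ext i j
    simp only [submatrix_apply, Fin.succAbove_last, Fin.succAbove_zero, Pmat]
    rfl
  rw [adjugate_submatrix_equiv_self, submatrix_apply, hP, Fin.val_last, Fin.val_zero,
    add_zero] at h
  have hsign : (-1 : R5) ^ (Nsz n - 1) = (-1) ^ n.choose 2 := by
    rw [Nsz_eq, Nat.add_sub_cancel, pow_add, pow_mul, neg_one_sq, one_pow, mul_one]
  have hcof : lastBlockCofactor n n = adjugate (Mmat n) (e 0) (e (Fin.last _)) := by
    rw [lastBlockCofactor, lastBlock, dif_pos le_rfl]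
    refine congr_arg₂ _ (Fin.ext rfl) (Fin.ext ?_)
    have := succ_le_Nsz n
    simp [e]
    omega
  rw [hcof, h, hsign, ← mul_assoc, ← pow_add, Even.neg_one_pow ⟨_, rfl⟩, one_mul]

theorem det_Pmat_eq (n : ℕ) :
    (Pmat n).det =
      (-1) ^ n.choose 2 * av ^ n * xv ^ n.choose 2 * tufact n * ∏ m ∈ range n, rowFactor m := by
  rw [det_Pmat, lastBlockCofactor_eq_cofactorFormula, cofactorFormula, twistedBinom_self]
  ring

/-- `det P_n / det P_{n-1} = (-1)^{n-1} a x^{n-1} [n]_{t,u} ∏_{i=1}^{n-1}(1 - a x^i [n-i]_{x,y})`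
(stated multiplicatively with `n+1` in place of `n`), and consequently
`det P_n = (-1)^{C(n,2)} a^n x^{C(n,2)} [n]_{t,u}! ∏_{m=1}^{n-1} ∏_{i=1}^m (1 - a x^i [m-i+1]_{x,y})`. -/
theorem stmt16 :
    (∀ n : ℕ,
      (Pmat (n + 1)).det =
        (-1 : R5) ^ n * av * xv ^ n * pqint tv uv (n + 1) *
          (∏ i ∈ Finset.Icc 1 n, (1 - av * xv ^ i * pqint xv yv (n + 1 - i))) *
          (Pmat n).det) ∧
    (∀ n : ℕ, 1 ≤ n →
      (Pmat n).det =
        (-1 : R5) ^ n.choose 2 * av ^ n * xv ^ n.choose 2 * tufact n *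
          ∏ m ∈ Finset.Icc 1 (n - 1), ∏ i ∈ Finset.Icc 1 m,
            (1 - av * xv ^ i * pqint xv yv (m - i + 1))) := by
  refine ⟨fun n => ?_, fun n hn => ?_⟩
  · rw [det_Pmat_eq, det_Pmat_eq, Nat.succ_choose_two, prod_range_succ, tufact_succ]
    change _ = _ * rowFactor n * _
    ring
  · obtain ⟨n, rfl⟩ := Nat.exists_eq_add_of_le' hn
    rw [det_Pmat_eq, Nat.add_sub_cancel, prod_range_succ', prod_Icc_one_eq_prod_range]
    have hrow (m : ℕ) : rowFactor (m + 1) = ∏ i ∈ Icc 1 (m + 1),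
        (1 - av * xv ^ i * pqint xv yv (m + 1 - i + 1)) :=
      prod_congr rfl fun i hi => by rw [hatCoeff, Nat.sub_add_comm (mem_Icc.mp hi).2]
    rw [show rowFactor 0 = 1 from prod_empty, mul_one]
    simp only [hrow]
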